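/- For all integers n, s ≥ 1 and any indeterminate X: the sum over partitions μ of n of (-1)^{n-ℓ(μ)} (X^{ℓ(μ)-1} / z_μ)(∑_{i=1}^{ℓ(μ)} (μ_i)_s) equals (s-1)! [C(X, n) - C(X-s, n)]. -/

import Mathlib

open Finset

/-- Ferrers diagram of a list of row lengths: cells `(i,j)` with `i` a row index
and `j < l[i]`. -/
def diagram (l : List ℕ) : Finset (ℕ × ℕ) :=
  (Finset.range l.length).biUnion fun i => (Finset.range (l.getD i 0)).image fun j => (i, j)

/-- `gbc l r` = `⟨λ, r⟩`: the number of `r`-element subsets of the Ferrers diagram of `l`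
containing at least one cell in every row. -/
def gbc (l : List ℕ) (r : ℕ) : ℕ :=
  (((diagram l).powersetCard r).filter
    (fun S => ∀ i ∈ Finset.range l.length, ∃ c ∈ S, c.1 = i)).card

/-- `⟨λ, r⟩` for integer `r`, zero for negative `r`. -/
def gbcZ (l : List ℕ) (r : ℤ) : ℕ := if 0 ≤ r then gbc l r.toNat else 0

/-- `⟨μ, r⟩` for a partition `μ` of `n`. -/
def gbcP {n : ℕ} (μ : n.Partition) (r : ℕ) : ℕ :=
  gbc (μ.parts.sort (· ≥ ·)) r

/-- `z_μ = ∏_{i ≥ 1} i^{m_i(μ)} m_i(μ)!`. -/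
def zMu {n : ℕ} (μ : n.Partition) : ℕ :=
  ∏ i ∈ μ.parts.toFinset, i ^ μ.parts.count i * (μ.parts.count i).factorial

/-- rising factorial `(a)_s = a(a+1)⋯(a+s-1)`. -/
def asc (a s : ℕ) : ℕ := ∏ t ∈ Finset.range s, (a + t)

/-- polynomial binomial coefficient `C(x, r) = x(x-1)⋯(x-r+1)/r!`. -/
def cb (x : ℚ) (r : ℕ) : ℚ := (∏ t ∈ Finset.range r, (x - t)) / r.factorial

/-- `h_k(1^x) = C(x+k-1, k) = x(x+1)⋯(x+k-1)/k!` as a polynomial in `x`. -/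
def hp (x : ℚ) (k : ℕ) : ℚ := (∏ t ∈ Finset.range k, (x + t)) / k.factorial

/-- integer binomial coefficient with the convention `C(a,b) = 0` unless `0 ≤ b ≤ a`. -/
def bin (a b : ℤ) : ℚ := if 0 ≤ b ∧ b ≤ a then ((a.toNat).choose b.toNat : ℚ) else 0

/-- integer binomial coefficient with the additional convention `C(-1,-1) = 1`. -/
def binC (a b : ℤ) : ℚ := if a = -1 ∧ b = -1 then 1 else bin a b

/-- unsigned Stirling numbers of the first kind:
`x(x+1)⋯(x+n-1) = ∑_k stir n k * x^k`. -/
def stir : ℕ → ℕ → ℕ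
  | 0, 0 => 1
  | 0, _ + 1 => 0
  | _ + 1, 0 => 0
  | n + 1, k + 1 => n * stir n (k + 1) + stir n k

def zM (p : Multiset ℕ) : ℕ :=
  ∏ i ∈ p.toFinset, i ^ p.count i * (p.count i).factorial

lemma zMu_eq {n : ℕ} (μ : n.Partition) : zMu μ = zM μ.parts := rfl

lemma zM_cons (k : ℕ) (p : Multiset ℕ) :
    zM (k ::ₘ p) = k * (p.count k + 1) * zM p := by
  unfold zM
  rw [Multiset.toFinset_cons]
  have hcongr : ∀ i ∈ p.toFinset.erase k,
      i ^ (k ::ₘ p).count i * ((k ::ₘ p).count i).factorial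
        = i ^ p.count i * (p.count i).factorial := by
    intro i hi
    rw [Multiset.count_cons_of_ne (Finset.ne_of_mem_erase hi)]
  by_cases hk : k ∈ p.toFinset
  · rw [Finset.insert_eq_self.2 hk, ← Finset.mul_prod_erase _ _ hk,
      ← Finset.mul_prod_erase _ _ hk, Finset.prod_congr rfl hcongr,
      Multiset.count_cons_self, pow_succ, Nat.factorial_succ]
    ring
  · have hc0 : p.count k = 0 := by
      simpa [Multiset.count_eq_zero] using fun h => hk (Multiset.mem_toFinset.2 h)
    rw [Finset.prod_insert hk, Multiset.count_cons_self, hc0]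
    have : ∀ i ∈ p.toFinset,
        i ^ (k ::ₘ p).count i * ((k ::ₘ p).count i).factorial
          = i ^ p.count i * (p.count i).factorial := by
      intro i hi
      exact hcongr i (Finset.mem_erase.2 ⟨fun h => hk (h ▸ hi), hi⟩)
    rw [Finset.prod_congr rfl this]
    simp [Nat.factorial]

lemma zM_pos {p : Multiset ℕ} (hp : ∀ i ∈ p, 0 < i) : 0 < zM p := by
  apply Finset.prod_pos
  intro i hi
  exact Nat.mul_pos (Nat.pow_pos (hp i (Multiset.mem_toFinset.1 hi)))
    (Nat.factorial_pos _)

lemma mem_parts_le {n : ℕ} (μ : n.Partition) {k : ℕ} (hk : k ∈ μ.parts) : k ≤ n := by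
  have h := Multiset.le_sum_of_mem hk
  rwa [μ.parts_sum] at h
  
lemma neg_one_pow_sub (n c : ℕ) (h : c ≤ n) :
    ((-1 : ℚ)) ^ (n - c) = (-1) ^ n * (-1) ^ c := by
  have : ((-1 : ℚ)) ^ (n - c) * (-1) ^ c = (-1) ^ n := by
    rw [← pow_add, Nat.sub_add_cancel h]
  have hc : ((-1 : ℚ)) ^ c ≠ 0 := by positivity
  calc ((-1:ℚ)) ^ (n - c) = ((-1:ℚ)) ^ (n-c) * ((-1)^c * (-1)^c) := by
        rw [← pow_add, ← two_mul, pow_mul]; norm_num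
    _ = (-1) ^ n * (-1) ^ c := by rw [← mul_assoc, this]

noncomputable def S (X : ℚ) (m : ℕ) : ℚ :=
  ∑ ν : m.Partition, (-1 : ℚ) ^ ν.parts.card * X ^ ν.parts.card / zMu ν

lemma S_zero (X : ℚ) : S X 0 = 1 := by
  rw [S, Fintype.sum_unique]
  simp [zMu, zM]

lemma key (n : ℕ) (X : ℚ) (f : ℕ → ℚ) :
    ∑ μ : n.Partition,
        (-1 : ℚ) ^ μ.parts.card * X ^ (μ.parts.card - 1) / zMu μ * (μ.parts.map f).sum
      = ∑ k ∈ Finset.Icc 1 n, -(f k / k) * S X (n - k) := by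
  have hmap : ∀ μ : n.Partition,
      (μ.parts.map f).sum = ∑ k ∈ Finset.Icc 1 n, (μ.parts.count k : ℚ) * f k := by
    intro μ
    rw [Finset.sum_multiset_map_count (M := ℚ) μ.parts f]
    simp only [nsmul_eq_mul]
    refine Finset.sum_subset ?_ ?_
    · intro k hk
      rw [Multiset.mem_toFinset] at hk
      exact Finset.mem_Icc.2 ⟨μ.parts_pos hk, mem_parts_le μ hk⟩
    · intro k _ hk
      rw [Multiset.mem_toFinset] at hk
      simp [Multiset.count_eq_zero.2 hk]
  have h1 : (∑ μ : n.Partition,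
        (-1 : ℚ) ^ μ.parts.card * X ^ (μ.parts.card - 1) / zMu μ * (μ.parts.map f).sum)
      = ∑ μ : n.Partition, ∑ k ∈ Finset.Icc 1 n,
          (-1 : ℚ) ^ μ.parts.card * X ^ (μ.parts.card - 1) / zMu μ
            * ((μ.parts.count k : ℚ) * f k) :=
    Finset.sum_congr rfl fun μ _ => by rw [hmap μ, Finset.mul_sum]
  rw [h1, Finset.sum_comm]
  refine Finset.sum_congr rfl fun k hk => ?_
  rw [Finset.mem_Icc] at hk
  obtain ⟨hk1, hkn⟩ := hk
  have hfilter : ∑ μ : n.Partition,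
      (-1 : ℚ) ^ μ.parts.card * X ^ (μ.parts.card - 1) / zMu μ
        * ((μ.parts.count k : ℚ) * f k)
      = ∑ μ ∈ Finset.univ.filter (fun μ : n.Partition => k ∈ μ.parts),
          (-1 : ℚ) ^ μ.parts.card * X ^ (μ.parts.card - 1) / zMu μ
            * ((μ.parts.count k : ℚ) * f k) := by
    symm
    refine Finset.sum_filter_of_ne fun μ _ hne => ?_
    by_contra hmem
    exact hne (by simp [Multiset.count_eq_zero.2 hmem])
  rw [hfilter, S, Finset.mul_sum]
  refine Finset.sum_bij'
    (i := fun (μ : n.Partition) (hμ : μ ∈ Finset.univ.filter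
        (fun μ : n.Partition => k ∈ μ.parts)) =>
      (⟨μ.parts.erase k,
        fun {g} hg => μ.parts_pos (Multiset.mem_of_mem_erase hg), by
          have h1 := congrArg Multiset.sum
            (Multiset.cons_erase ((Finset.mem_filter.1 hμ).2))
          rw [Multiset.sum_cons, μ.parts_sum] at h1
          omega⟩ : (n - k).Partition))
    (j := fun (ν : (n - k).Partition) _ =>
      (⟨k ::ₘ ν.parts, fun {g} hg => by
          rcases Multiset.mem_cons.1 hg with h | h
          · omega
          · exact ν.parts_pos h, by
          rw [Multiset.sum_cons, ν.parts_sum]; omega⟩ : n.Partition))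
    ?_ ?_ ?_ ?_ ?_
  · intro μ hμ
    exact Finset.mem_univ _
  · intro ν hν
    refine Finset.mem_filter.2 ⟨Finset.mem_univ _, ?_⟩
    exact Multiset.mem_cons_self _ _
  · intro μ hμ
    exact Nat.Partition.ext (Multiset.cons_erase (Finset.mem_filter.1 hμ).2)
  · intro ν hν
    exact Nat.Partition.ext (Multiset.erase_cons_head _ _)
  · intro μ hμ
    have hkμ : k ∈ μ.parts := (Finset.mem_filter.1 hμ).2
    obtain ⟨q, hcons⟩ : ∃ q, μ.parts = k ::ₘ q := ⟨_, (Multiset.cons_erase hkμ).symm⟩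
    have hq0 : (zM q : ℚ) ≠ 0 := by
      have : 0 < zM q := zM_pos fun i hi =>
        μ.parts_pos (by rw [hcons]; exact Multiset.mem_cons_of_mem hi)
      exact_mod_cast this.ne'
    have hk0 : (k : ℚ) ≠ 0 := by exact_mod_cast (by omega : k ≠ 0)
    have hc0 : ((q.count k : ℚ) + 1) ≠ 0 := by positivity
    simp only [zMu_eq, hcons, Multiset.erase_cons_head, Multiset.card_cons,
      Multiset.count_cons_self, zM_cons, Nat.add_sub_cancel]
    push_cast
    rw [pow_succ]
    field_simp

lemma sum_Icc_one (n : ℕ) (g : ℕ → ℚ) :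
    ∑ k ∈ Finset.Icc 1 n, g k = ∑ i ∈ Finset.range n, g (i + 1) := by
  refine Finset.sum_nbij' (i := fun k => k - 1) (j := fun i => i + 1) ?_ ?_ ?_ ?_ ?_
  · intro a ha; rw [Finset.mem_Icc] at ha; rw [Finset.mem_range]; omega
  · intro a ha; rw [Finset.mem_range] at ha; rw [Finset.mem_Icc]; omega
  · intro a ha; rw [Finset.mem_Icc] at ha; omega
  · intro a ha; omega
  · intro a ha; rw [Finset.mem_Icc] at ha
    congr 1; omega

lemma parts_card_le {n : ℕ} (μ : n.Partition) : μ.parts.card ≤ n := by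
  have h := Multiset.card_nsmul_le_sum (fun x hx => μ.parts_pos hx)
  rw [μ.parts_sum] at h
  simpa using h

lemma parts_card_pos {n : ℕ} (hn : 1 ≤ n) (μ : n.Partition) : 1 ≤ μ.parts.card := by
  rcases Nat.eq_zero_or_pos μ.parts.card with h | h
  · exfalso
    rw [Multiset.card_eq_zero] at h
    have := μ.parts_sum
    rw [h] at this
    simp at this
    omega
  · exact h

lemma S_rec (X : ℚ) {n : ℕ} (hn : 1 ≤ n) :
    (n : ℚ) * S X n = -X * ∑ k ∈ Finset.Icc 1 n, S X (n - k) := by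
  have hkey := key n X (fun a => (a : ℚ))
  have hR : ∑ k ∈ Finset.Icc 1 n, -((k : ℚ) / k) * S X (n - k)
      = -∑ k ∈ Finset.Icc 1 n, S X (n - k) := by
    rw [← Finset.sum_neg_distrib]
    refine Finset.sum_congr rfl fun k hk => ?_
    rw [Finset.mem_Icc] at hk
    have : (k : ℚ) ≠ 0 := by exact_mod_cast (by omega : k ≠ 0)
    rw [div_self this]
    ring
  rw [hR] at hkey
  rw [show -X * ∑ k ∈ Finset.Icc 1 n, S X (n - k)
      = X * -∑ k ∈ Finset.Icc 1 n, S X (n - k) from by ring, ← hkey]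
  rw [S, Finset.mul_sum, Finset.mul_sum]
  refine Finset.sum_congr rfl fun μ _ => ?_
  have hmapsum : (Multiset.map (fun a : ℕ => (a : ℚ)) μ.parts).sum = (n : ℚ) := by
    have h := congrArg (Nat.cast : ℕ → ℚ) μ.parts_sum
    rw [Nat.cast_multiset_sum] at h
    exact h
  have hcard := parts_card_pos hn μ
  have hpow : X ^ (μ.parts.card - 1) * X = X ^ μ.parts.card := by
    rw [← pow_succ, Nat.sub_add_cancel hcard]
  rw [hmapsum, ← hpow]
  ring

lemma cb_zero (X : ℚ) : cb X 0 = 1 := by simp [cb]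

lemma cb_succ (X : ℚ) (n : ℕ) : cb X (n + 1) = cb X n * (X - n) / (n + 1) := by
  rw [cb, cb, Finset.prod_range_succ, Nat.factorial_succ, div_mul_eq_mul_div, div_div]
  push_cast
  rw [mul_comm ((n : ℚ) + 1)]

lemma cbrec (X : ℚ) : ∀ n : ℕ, 1 ≤ n →
    (n : ℚ) * ((-1) ^ n * cb X n) = -X * ∑ j ∈ Finset.range n, ((-1) ^ j * cb X j) := by
  intro n
  induction n with
  | zero => omega
  | succ m IH =>
    intro _
    rcases Nat.eq_zero_or_pos m with h0 | hm
    · subst h0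
      rw [Finset.sum_range_one, cb_succ, cb_zero]
      norm_num
    · rw [Finset.sum_range_succ, mul_add, ← IH hm, cb_succ]
      have h2 : ((m : ℚ) + 1) ≠ 0 := by positivity
      push_cast
      rw [pow_succ]
      field_simp
      ring

lemma S_eq (X : ℚ) : ∀ m : ℕ, S X m = (-1) ^ m * cb X m := by
  intro m
  induction m using Nat.strong_induction_on with
  | _ m IH =>
    rcases Nat.eq_zero_or_pos m with h0 | hm
    · subst h0
      rw [S_zero, cb_zero]
      norm_num
    · have h1 := S_rec X hm
      have h2 : ∑ k ∈ Finset.Icc 1 m, S X (m - k)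
          = ∑ j ∈ Finset.range m, ((-1) ^ j * cb X j) := by
        rw [sum_Icc_one m (fun k => S X (m - k))]
        rw [Finset.sum_congr rfl (fun i (hi : i ∈ Finset.range m) => by
          rw [show m - (i + 1) = m - 1 - i from by omega,
            IH (m - 1 - i) (by rw [Finset.mem_range] at hi; omega)])]
        exact Finset.sum_range_reflect (fun j => (-1 : ℚ) ^ j * cb X j) m
      rw [h2, ← cbrec X m hm] at h1
      have hm0 : (m : ℚ) ≠ 0 := by exact_mod_cast hm.ne'
      exact mul_left_cancel₀ hm0 h1

lemma asc_factorial (k : ℕ) (hk : 1 ≤ k) :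
    ∀ s : ℕ, asc k s * (k - 1).factorial = (k + s - 1).factorial := by
  intro s
  induction s with
  | zero => simp [asc]
  | succ s IH =>
    rw [asc, Finset.prod_range_succ, ← asc,
      show k + (s + 1) - 1 = (k + s - 1) + 1 from by omega, Nat.factorial_succ,
      show k + s - 1 + 1 = k + s from by omega,
      show asc k s * (k + s) * (k - 1).factorial
        = (k + s) * (asc k s * (k - 1).factorial) from by ring, IH]

lemma asc_div (k s : ℕ) (hk : 1 ≤ k) (hs : 1 ≤ s) :
    (asc k s : ℚ) / k = ((s - 1).factorial : ℚ) * ((s + k - 1).choose k : ℚ) := by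
  have h1 := asc_factorial k hk s
  have h2 := Nat.choose_mul_factorial_mul_factorial (show k ≤ s + k - 1 by omega)
  rw [show s + k - 1 - k = s - 1 from by omega] at h2
  have h4 : k.factorial = k * (k - 1).factorial := (Nat.mul_factorial_pred (by omega)).symm
  have h5 : asc k s = (s + k - 1).choose k * k * (s - 1).factorial := by
    have h6 : asc k s * (k - 1).factorial
        = (s + k - 1).choose k * k * (s - 1).factorial * (k - 1).factorial := by
      rw [h1, show k + s - 1 = s + k - 1 from by omega, ← h2, h4]
      ring
    exact Nat.eq_of_mul_eq_mul_right (Nat.factorial_pos _) h6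
  rw [h5]
  have hk0 : (k : ℚ) ≠ 0 := by exact_mod_cast (by omega : k ≠ 0)
  push_cast
  field_simp

lemma cb_pascal (X : ℚ) (n : ℕ) : cb (X + 1) (n + 1) = cb X (n + 1) + cb X n := by
  have hprod : ∏ t ∈ Finset.range (n + 1), (X + 1 - t)
      = (∏ t ∈ Finset.range n, (X - t)) * (X + 1) := by
    rw [Finset.prod_range_succ']
    congr 1
    · refine Finset.prod_congr rfl fun t _ => ?_
      push_cast
      ring
    · norm_num
  rw [cb, cb, cb, hprod, Finset.prod_range_succ, Nat.factorial_succ]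
  have h1 : (n.factorial : ℚ) ≠ 0 := by exact_mod_cast n.factorial_pos.ne'
  have h2 : ((n : ℚ) + 1) ≠ 0 := by positivity
  push_cast
  field_simp
  ring

lemma Rlem (X : ℚ) : ∀ s n : ℕ, cb (X - (s : ℚ)) n
    = ∑ k ∈ Finset.range (n + 1),
        (-1 : ℚ) ^ k * ((s + k - 1).choose k : ℚ) * cb X (n - k) := by
  intro s
  induction s with
  | zero =>
    intro n
    rw [Finset.sum_eq_single_of_mem 0 (Finset.mem_range.2 (by omega))
      (fun k _ hk0 => by
        rw [show 0 + k - 1 = k - 1 from by omega,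
          Nat.choose_eq_zero_of_lt (by omega : k - 1 < k)]
        push_cast
        ring)]
    norm_num
  | succ s IHs =>
    intro n
    induction n with
    | zero =>
      rw [Finset.sum_range_one]
      norm_num [cb_zero]
    | succ m IHm =>
      have key2 := cb_pascal (X - ((s + 1 : ℕ) : ℚ)) m
      have hcast : X - ((s + 1 : ℕ) : ℚ) + 1 = X - (s : ℚ) := by push_cast; ring
      rw [hcast] at key2
      have hgoal : cb (X - ((s + 1 : ℕ) : ℚ)) (m + 1)
          = cb (X - (s : ℚ)) (m + 1) - cb (X - ((s + 1 : ℕ) : ℚ)) m := by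
        rw [key2]; ring
      rw [hgoal, IHs (m + 1), IHm]
      rw [Finset.sum_range_succ'
        (fun k => (-1 : ℚ) ^ k * ((s + k - 1).choose k : ℚ) * cb X (m + 1 - k)) (m + 1)]
      rw [Finset.sum_range_succ'
        (fun k => (-1 : ℚ) ^ k * ((s + 1 + k - 1).choose k : ℚ) * cb X (m + 1 - k)) (m + 1)]
      have e1 : ∑ i ∈ Finset.range (m + 1),
            (-1 : ℚ) ^ (i + 1) * ((s + (i + 1) - 1).choose (i + 1) : ℚ) * cb X (m + 1 - (i + 1))
          = ∑ i ∈ Finset.range (m + 1),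
            (-1 : ℚ) ^ (i + 1) * ((s + i).choose (i + 1) : ℚ) * cb X (m - i) :=
        Finset.sum_congr rfl fun i _ => by
          rw [show s + (i + 1) - 1 = s + i from by omega,
            show m + 1 - (i + 1) = m - i from by omega]
      have e2 : ∑ i ∈ Finset.range (m + 1),
            (-1 : ℚ) ^ (i + 1) * ((s + 1 + (i + 1) - 1).choose (i + 1) : ℚ)
              * cb X (m + 1 - (i + 1))
          = ∑ i ∈ Finset.range (m + 1),
            (-1 : ℚ) ^ (i + 1) * (((s + i) + 1).choose (i + 1) : ℚ) * cb X (m - i) :=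
        Finset.sum_congr rfl fun i _ => by
          rw [show s + 1 + (i + 1) - 1 = s + i + 1 from by omega,
            show m + 1 - (i + 1) = m - i from by omega]
      have e3 : ∑ k ∈ Finset.range (m + 1),
            (-1 : ℚ) ^ k * ((s + 1 + k - 1).choose k : ℚ) * cb X (m - k)
          = ∑ i ∈ Finset.range (m + 1),
            (-1 : ℚ) ^ i * ((s + i).choose i : ℚ) * cb X (m - i) :=
        Finset.sum_congr rfl fun i _ => by
          rw [show s + 1 + i - 1 = s + i from by omega]
      rw [e1, e2, e3]
      have e0 : ((s + 0 - 1).choose 0 : ℚ) = 1 := by norm_num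
      have e0' : ((s + 1 + 0 - 1).choose 0 : ℚ) = 1 := by norm_num
      rw [e0, e0']
      have emain : ∑ i ∈ Finset.range (m + 1),
            (-1 : ℚ) ^ (i + 1) * ((s + i).choose (i + 1) : ℚ) * cb X (m - i)
          - ∑ i ∈ Finset.range (m + 1),
            (-1 : ℚ) ^ i * ((s + i).choose i : ℚ) * cb X (m - i)
          = ∑ i ∈ Finset.range (m + 1),
            (-1 : ℚ) ^ (i + 1) * (((s + i) + 1).choose (i + 1) : ℚ) * cb X (m - i) := by
        rw [← Finset.sum_sub_distrib]
        refine Finset.sum_congr rfl fun i _ => ?_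
        rw [Nat.choose_succ_succ' (s + i) i]
        push_cast
        rw [pow_succ]
        ring
      rw [← emain]
      ring

theorem stmt11 (n s : ℕ) (hn : 1 ≤ n) (hs : 1 ≤ s) (X : ℚ) :
    ∑ μ : n.Partition, (-1 : ℚ) ^ (n - μ.parts.card) * X ^ (μ.parts.card - 1) / zMu μ
        * (μ.parts.map fun a => (asc a s : ℚ)).sum
      = ((s - 1).factorial : ℚ) * (cb X n - cb (X - s) n) := by
  have hstep : ∑ μ : n.Partition, (-1 : ℚ) ^ (n - μ.parts.card) * X ^ (μ.parts.card - 1)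
        / zMu μ * (μ.parts.map fun a => (asc a s : ℚ)).sum
      = (-1 : ℚ) ^ n * ∑ μ : n.Partition, (-1 : ℚ) ^ μ.parts.card * X ^ (μ.parts.card - 1)
        / zMu μ * (μ.parts.map fun a => (asc a s : ℚ)).sum := by
    rw [Finset.mul_sum]
    refine Finset.sum_congr rfl fun μ _ => ?_
    rw [neg_one_pow_sub n _ (parts_card_le μ)]
    ring
  rw [hstep, key n X (fun a => (asc a s : ℚ)), Finset.mul_sum]
  have hnn : ((-1 : ℚ)) ^ n * (-1) ^ n = 1 := by
    rw [← pow_add, ← two_mul, pow_mul]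
    norm_num
  have hterm : ∀ k ∈ Finset.Icc 1 n,
      (-1 : ℚ) ^ n * (-((asc k s : ℚ) / k) * S X (n - k))
        = -((s - 1).factorial : ℚ)
            * ((-1 : ℚ) ^ k * (((s + k - 1).choose k : ℕ) : ℚ) * cb X (n - k)) := by
    intro k hk
    rw [Finset.mem_Icc] at hk
    rw [S_eq X (n - k), asc_div k s hk.1 hs, neg_one_pow_sub n k hk.2]
    linear_combination (-(((s - 1).factorial : ℚ) * (((s + k - 1).choose k : ℕ) : ℚ)
      * ((-1 : ℚ) ^ k * cb X (n - k)))) * hnn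
  rw [Finset.sum_congr rfl hterm, ← Finset.mul_sum]
  have hsum : ∑ k ∈ Finset.Icc 1 n,
      (-1 : ℚ) ^ k * (((s + k - 1).choose k : ℕ) : ℚ) * cb X (n - k)
      = cb (X - s) n - cb X n := by
    have hr := Rlem X s n
    rw [Finset.sum_range_succ'
      (fun k => (-1 : ℚ) ^ k * (((s + k - 1).choose k : ℕ) : ℚ) * cb X (n - k)) n] at hr
    rw [sum_Icc_one n
      (fun k => (-1 : ℚ) ^ k * (((s + k - 1).choose k : ℕ) : ℚ) * cb X (n - k)), hr]
    norm_num
  rw [hsum]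
  ring
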